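/- arXiv:1901.05336 — 2 statements merged into one kernel-verified Lean document; each statement's English description precedes it below -/
import Mathlib

section
/- For all constants k₁ > 0, k₂ > 0, every exponent c with 0 < c ≤ 1, all bandwidths B₁, B₂ > 0 and powers P₁, P₂ ≥ 0, the potential spectral efficiency function F(B, P) = k₁ · B · (1 - exp(-k₂ · (P/B)^c)) is superadditive: F(B₁ + B₂, P₁ + P₂) ≥ F(B₁, P₁) + F(B₂, P₂). Equivalently, if two tenants with the same user density split a total bandwidth B_tot = B₁ + B₂ and total power P_tot = P₁ + P₂, their sum-PSE never exceeds 2 · F(B_tot/2, P_tot/2), the sum-PSE at the equal split. (This is the precise, correctly oriented form of the comparison in Lemma 2 of the paper.) -/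
/-! The function `g x = 1 - exp (-k₂ * x ^ c)` is concave on `[0, ∞)`, being a nondecreasing
concave function of the concave `x ^ c`, and `F (B, P) = k₁ * B * g (P / B)` is `k₁` times its
perspective. Concavity of `g` at `P₁ / B₁` and `P₂ / B₂` with weights `Bᵢ / (B₁ + B₂)`,
multiplied through by `B₁ + B₂`, is exactly superadditivity of the perspective. -/

open Real Set

lemma concaveOn_one_sub_exp_neg_mul (k : ℝ) :
    ConcaveOn ℝ univ fun y : ℝ ↦ 1 - exp (-k * y) :=
  (concaveOn_const 1 convex_univ).sub (convexOn_exp.comp_linearMap (LinearMap.mul ℝ ℝ (-k)))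

lemma monotone_one_sub_exp_neg_mul {k : ℝ} (hk : 0 ≤ k) :
    Monotone fun y : ℝ ↦ 1 - exp (-k * y) := fun _ _ hxy ↦
  sub_le_sub_left (exp_le_exp.2 (mul_le_mul_of_nonpos_left hxy (neg_nonpos.2 hk))) 1

lemma concaveOn_one_sub_exp_neg_mul_rpow {k c : ℝ} (hk : 0 ≤ k) (hc₀ : 0 ≤ c) (hc₁ : c ≤ 1) :
    ConcaveOn ℝ (Ici 0) fun x : ℝ ↦ 1 - exp (-k * x ^ c) :=
  ((concaveOn_one_sub_exp_neg_mul k).subset (subset_univ _)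
    (Real.convex_iff_isPreconnected.2 <|
      isPreconnected_Ici.image _ (continuous_rpow_const hc₀).continuousOn)).comp
    (concaveOn_rpow hc₀ hc₁) ((monotone_one_sub_exp_neg_mul hk).monotoneOn _)

lemma ConcaveOn.perspective_add_le {s : Set ℝ} {g : ℝ → ℝ} (hg : ConcaveOn ℝ s g)
    {B₁ B₂ P₁ P₂ : ℝ} (hB₁ : 0 < B₁) (hB₂ : 0 < B₂) (h₁ : P₁ / B₁ ∈ s) (h₂ : P₂ / B₂ ∈ s) :
    B₁ * g (P₁ / B₁) + B₂ * g (P₂ / B₂) ≤ (B₁ + B₂) * g ((P₁ + P₂) / (B₁ + B₂)) := by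
  have hB : 0 < B₁ + B₂ := add_pos hB₁ hB₂
  have hconc := hg.2 h₁ h₂ (div_pos hB₁ hB).le (div_pos hB₂ hB).le (by field_simp)
  simp only [smul_eq_mul] at hconc
  have hmix : B₁ / (B₁ + B₂) * (P₁ / B₁) + B₂ / (B₁ + B₂) * (P₂ / B₂) = (P₁ + P₂) / (B₁ + B₂) := by
    field_simp
  rw [hmix] at hconc
  calc B₁ * g (P₁ / B₁) + B₂ * g (P₂ / B₂)
      = (B₁ + B₂) * (B₁ / (B₁ + B₂) * g (P₁ / B₁) + B₂ / (B₁ + B₂) * g (P₂ / B₂)) := by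
        field_simp
    _ ≤ (B₁ + B₂) * g ((P₁ + P₂) / (B₁ + B₂)) := by gcongr

theorem PSE_superadditive (k₁ k₂ c : ℝ) (hk₁ : 0 < k₁) (hk₂ : 0 < k₂)
    (hc0 : 0 < c) (hc1 : c ≤ 1) (B₁ B₂ P₁ P₂ : ℝ)
    (hB₁ : 0 < B₁) (hB₂ : 0 < B₂) (hP₁ : 0 ≤ P₁) (hP₂ : 0 ≤ P₂) :
    k₁ * (B₁ + B₂) * (1 - Real.exp (-k₂ * ((P₁ + P₂) / (B₁ + B₂)) ^ c)) ≥
      k₁ * B₁ * (1 - Real.exp (-k₂ * (P₁ / B₁) ^ c)) +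
      k₁ * B₂ * (1 - Real.exp (-k₂ * (P₂ / B₂) ^ c)) := by
  have h := (concaveOn_one_sub_exp_neg_mul_rpow hk₂.le hc0.le hc1).perspective_add_le hB₁ hB₂
    (mem_Ici.2 (div_nonneg hP₁ hB₁.le)) (mem_Ici.2 (div_nonneg hP₂ hB₂.le))
  have := mul_le_mul_of_nonneg_left h hk₁.le
  simpa only [mul_add, add_mul, mul_assoc, ge_iff_le] using this
end

section
/- For all constants C > 0, A > 0 and Υ ≥ 0, the function r ↦ C · (L(r)/(1 + L(r)·Υ)) · (1 - exp(-A · (1 + L(r)·Υ))), where L(r) = 1 - (1 + r/3.5)^(-3.5), is strictly increasing on [0, ∞); i.e., the closed-form potential spectral efficiency of Eq. (6) is strictly increasing in the ratio r = λ_T/λ_BS of user to base-station densities. -/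
/-! The potential spectral efficiency is `g ∘ L`, where the load `L(r) = 1 - (1 + r/3.5)^(-3.5)`
is nonnegative and strictly increasing on `[0, ∞)`, and
`g(x) = C · x/(1 + xΥ) · (1 - exp(-A(1 + xΥ)))` is strictly increasing on `[0, ∞)`: its first factor
`x/(1 + xΥ)` increases strictly, and its second factor is positive and nondecreasing. -/

open Real Set

lemma StrictMonoOn.mul_monotoneOn_of_nonneg_of_pos {α β : Type*} [Preorder α]
    [Mul β] [Zero β] [Preorder β] [PosMulMono β] [MulPosStrictMono β]
    {f g : α → β} {s : Set α} (hf : StrictMonoOn f s) (hg : MonotoneOn g s)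
    (hf₀ : ∀ x ∈ s, 0 ≤ f x) (hg₀ : ∀ x ∈ s, 0 < g x) :
    StrictMonoOn (fun x => f x * g x) s := fun _ ha _ hb hab =>
  mul_lt_mul_of_lt_of_le_of_nonneg_of_pos (hf ha hb hab) (hg ha hb hab.le) (hf₀ _ ha) (hg₀ _ hb)

lemma strictMonoOn_one_sub_one_add_div_rpow_neg {c p : ℝ} (hc : 0 < c) (hp : 0 < p) :
    StrictMonoOn (fun r : ℝ => 1 - (1 + r / c) ^ (-p)) (Ici 0) := by
  intro r hr s _ hrs
  have hr' : 0 < 1 + r / c := by have := div_nonneg (mem_Ici.mp hr) hc.le; linarith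
  have hrs' : 1 + r / c < 1 + s / c := by gcongr
  exact sub_lt_sub_left (rpow_lt_rpow_of_neg hr' hrs' (neg_lt_zero.mpr hp)) 1

lemma mapsTo_one_sub_one_add_div_rpow_neg {c p : ℝ} (hc : 0 ≤ c) (hp : 0 ≤ p) :
    MapsTo (fun r : ℝ => 1 - (1 + r / c) ^ (-p)) (Ici 0) (Ici 0) := by
  intro r hr
  have h₁ : 1 ≤ 1 + r / c := le_add_of_nonneg_right (div_nonneg (mem_Ici.mp hr) hc)
  have := rpow_le_one_of_one_le_of_nonpos h₁ (neg_nonpos.mpr hp)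
  exact mem_Ici.mpr (sub_nonneg.mpr this)

lemma strictMonoOn_div_one_add_mul {Υ : ℝ} (hΥ : 0 ≤ Υ) :
    StrictMonoOn (fun x : ℝ => x / (1 + x * Υ)) (Ici 0) := by
  intro x hx y hy hxy
  have hx' : 0 < 1 + x * Υ := by have := mul_nonneg (mem_Ici.mp hx) hΥ; linarith
  have hy' : 0 < 1 + y * Υ := by have := mul_nonneg (mem_Ici.mp hy) hΥ; linarith
  rw [div_lt_div_iff₀ hx' hy']
  linarith

lemma monotone_one_sub_exp_neg_mul_one_add_mul {A Υ : ℝ} (hA : 0 ≤ A) (hΥ : 0 ≤ Υ) :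
    Monotone (fun x : ℝ => 1 - exp (-A * (1 + x * Υ))) := by
  intro x y hxy
  have : -A * (1 + y * Υ) ≤ -A * (1 + x * Υ) :=
    mul_le_mul_of_nonpos_left (by gcongr) (neg_nonpos.mpr hA)
  exact sub_le_sub_left (exp_le_exp.mpr this) 1

lemma one_sub_exp_neg_mul_one_add_mul_pos {A Υ x : ℝ} (hA : 0 < A) (hΥ : 0 ≤ Υ) (hx : 0 ≤ x) :
    0 < 1 - exp (-A * (1 + x * Υ)) := by
  have : 0 < A * (1 + x * Υ) := by positivity
  simpa [neg_mul] using this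

lemma strictMonoOn_spectralEfficiency_of_load {C A Υ : ℝ} (hC : 0 < C) (hA : 0 < A) (hΥ : 0 ≤ Υ) :
    StrictMonoOn (fun x : ℝ => C * (x / (1 + x * Υ)) * (1 - exp (-A * (1 + x * Υ)))) (Ici 0) := by
  have hfirst : StrictMonoOn (fun x : ℝ => C * (x / (1 + x * Υ))) (Ici 0) :=
    fun _ ha _ hb hab => mul_lt_mul_of_pos_left (strictMonoOn_div_one_add_mul hΥ ha hb hab) hC
  refine hfirst.mul_monotoneOn_of_nonneg_of_pos
    ((monotone_one_sub_exp_neg_mul_one_add_mul hA.le hΥ).monotoneOn _) (fun x hx => ?_)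
    (fun x hx => one_sub_exp_neg_mul_one_add_mul_pos hA hΥ hx)
  have hx' : 0 ≤ x := mem_Ici.mp hx
  exact mul_nonneg hC.le (div_nonneg hx' (by positivity))

theorem PSE_strictMono_in_density_ratio (C A Υ : ℝ) (hC : 0 < C) (hA : 0 < A) (hΥ : 0 ≤ Υ) :
    StrictMonoOn
      (fun r : ℝ =>
        C * ((1 - (1 + r / 3.5) ^ (-3.5 : ℝ)) / (1 + (1 - (1 + r / 3.5) ^ (-3.5 : ℝ)) * Υ)) *
          (1 - Real.exp (-A * (1 + (1 - (1 + r / 3.5) ^ (-3.5 : ℝ)) * Υ))))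
      (Set.Ici (0 : ℝ)) :=
  (strictMonoOn_spectralEfficiency_of_load hC hA hΥ).comp
    (strictMonoOn_one_sub_one_add_div_rpow_neg (by norm_num) (by norm_num))
    (mapsTo_one_sub_one_add_div_rpow_neg (by norm_num) (by norm_num))
end
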